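/- If a graph G admits an oriented d-cycle double cover for some d ≥ 3, then φ_{d−1}(G) = 2, i.e., G admits a flow with all edge values of equal Euclidean norm in ℝ^{d−1}. -/

import Mathlib

/-!
Give an edge `uv` the vector of `ℝ^d` whose `i`-th coordinate is `±1` if the `i`-th cycle of the
double cover traverses `uv` (in either direction) and `0` otherwise. Each cycle is a circulation,
so this is a flow; since every edge lies on exactly two cycles with opposite orientations, its
values have norm `√2` and lie in the hyperplane `∑ i, x i = 0`. Identifying that hyperplane
isometrically with `ℝ^{d-1}` and scaling by `1/√2` gives a flow with all values of norm `1`.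
-/

open scoped BigOperators

/-- `Hd d` : vectors in `ℝ^d` with exactly one coordinate `1`, one `-1`, rest `0`. -/
def Hd (d : ℕ) : Set (EuclideanSpace ℝ (Fin d)) :=
  {x | ∃ i j : Fin d, i ≠ j ∧ x i = 1 ∧ x j = -1 ∧ ∀ k, k ≠ i → k ≠ j → x k = 0}
/-- A flow on a graph, represented as an antisymmetric function on ordered pairs of vertices,
supported on edges, with conservation at every vertex. -/
def IsFlow {V : Type*} [Fintype V] {d : ℕ} (G : SimpleGraph V)
    (f : V → V → EuclideanSpace ℝ (Fin d)) : Prop :=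
  (∀ u v, f u v = - f v u) ∧ (∀ u v, ¬ G.Adj u v → f u v = 0) ∧ (∀ v, ∑ u, f v u = 0)

/-- `G` admits a flow with all edge values in the (symmetric) set `X`. -/
def HasFlowIn {V : Type*} [Fintype V] {d : ℕ} (G : SimpleGraph V)
    (X : Set (EuclideanSpace ℝ (Fin d))) : Prop :=
  ∃ f, IsFlow G f ∧ ∀ u v, G.Adj u v → f u v ∈ X
/-- An oriented `d`-cycle double cover: `d` integer circulations with values in `{-1,0,1}`
(each being an eulerian-oriented even subgraph, i.e. a directed cycle), such that every edge
lies in exactly two of them (`∑ i, (c i u v)^2 = 2`) with opposite orientations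
(`∑ i, c i u v = 0`). -/
def IsOrientedCDC {V : Type*} [Fintype V] (G : SimpleGraph V) {d : ℕ}
    (c : Fin d → V → V → ℤ) : Prop :=
  (∀ i u v, c i u v = - c i v u) ∧
  (∀ i u v, ¬ G.Adj u v → c i u v = 0) ∧
  (∀ i u v, c i u v = 1 ∨ c i u v = 0 ∨ c i u v = -1) ∧
  (∀ i v, ∑ u, c i v u = 0) ∧
  (∀ u v, G.Adj u v → (∑ i, (c i u v)^2 = 2 ∧ ∑ i, c i u v = 0))
/-- `G` admits an `(r, d)`-NZF: a flow into `ℝ^d` with all edge values of norm in `[1, r-1]`. -/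
def HasNZF {V : Type*} [Fintype V] (G : SimpleGraph V) (r : ℝ) (d : ℕ) : Prop :=
  ∃ f : V → V → EuclideanSpace ℝ (Fin d), IsFlow G f ∧
    ∀ u v, G.Adj u v → ‖f u v‖ ∈ Set.Icc (1 : ℝ) (r - 1)

/-- The `d`-dimensional flow number: the infimum of `r ≥ 2` such that `G` has an `(r,d)`-NZF. -/
noncomputable def flowNumber {V : Type*} [Fintype V] (G : SimpleGraph V) (d : ℕ) : ℝ :=
  sInf {r : ℝ | 2 ≤ r ∧ HasNZF G r d}


open Module

theorem Submodule.exists_linearMap_euclideanSpace_norm_eq {E : Type*}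
    [NormedAddCommGroup E] [InnerProductSpace ℝ E] (K : Submodule ℝ E) [FiniteDimensional ℝ K]
    {m : ℕ} (hK : finrank ℝ K = m) :
    ∃ T : E →ₗ[ℝ] EuclideanSpace ℝ (Fin m), ∀ x ∈ K, ‖T x‖ = ‖x‖ := by
  let L := ((stdOrthonormalBasis ℝ K).reindex (finCongr hK)).repr
  refine ⟨L.toLinearMap ∘ₗ K.orthogonalProjectionOnto.toLinearMap, fun x hx => ?_⟩
  have hproj : K.orthogonalProjectionOnto x = ⟨x, hx⟩ :=
    K.orthogonalProjectionOnto_mem_subspace_eq_self ⟨x, hx⟩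
  simp [hproj]

noncomputable def EuclideanSpace.coordSum (n : ℕ) : Dual ℝ (EuclideanSpace ℝ (Fin n)) :=
  ∑ i, (EuclideanSpace.proj i).toLinearMap

@[simp]
theorem EuclideanSpace.coordSum_apply {n : ℕ} (x : EuclideanSpace ℝ (Fin n)) :
    coordSum n x = ∑ i, x i := by
  simp [coordSum]

theorem EuclideanSpace.finrank_ker_coordSum (n : ℕ) :
    finrank ℝ (LinearMap.ker (coordSum n)) = n - 1 := by
  rcases n with _ | n
  · exact Nat.le_zero.mp ((Submodule.finrank_le _).trans_eq finrank_euclideanSpace_fin)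
  · have hS : coordSum (n + 1) ≠ 0 := by
      intro h0
      simpa using congr($h0 (EuclideanSpace.single 0 1))
    have := Dual.finrank_ker_add_one_of_ne_zero hS
    rw [finrank_euclideanSpace_fin] at this
    omega

theorem EuclideanSpace.exists_linearMap_norm_eq_of_sum_eq_zero (n : ℕ) :
    ∃ T : EuclideanSpace ℝ (Fin n) →ₗ[ℝ] EuclideanSpace ℝ (Fin (n - 1)),
      ∀ x : EuclideanSpace ℝ (Fin n), ∑ i, x i = 0 → ‖T x‖ = ‖x‖ := by
  obtain ⟨T, hT⟩ := Submodule.exists_linearMap_euclideanSpace_norm_eq _ (finrank_ker_coordSum n)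
  exact ⟨T, fun x hx => hT x (by simpa using hx)⟩

section Flows

variable {V : Type*} [Fintype V] {G : SimpleGraph V}

theorem IsFlow.map {d m : ℕ} {f : V → V → EuclideanSpace ℝ (Fin d)} (hf : IsFlow G f)
    (T : EuclideanSpace ℝ (Fin d) →ₗ[ℝ] EuclideanSpace ℝ (Fin m)) :
    IsFlow G (fun u v => T (f u v)) := by
  obtain ⟨hanti, hsupp, hcons⟩ := hf
  exact ⟨fun u v => by simp only [hanti u v, map_neg],
    fun u v huv => by simp only [hsupp u v huv, map_zero],
    fun v => by simp only [← map_sum, hcons v, map_zero]⟩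

theorem flowNumber_eq_two_of_exists_unit_flow {d : ℕ}
    (h : ∃ f : V → V → EuclideanSpace ℝ (Fin d), IsFlow G f ∧ ∀ u v, G.Adj u v → ‖f u v‖ = 1) :
    flowNumber G d = 2 := by
  obtain ⟨f, hflow, hnorm⟩ := h
  have hnzf : HasNZF G 2 d :=
    ⟨f, hflow, fun u v huv => by norm_num [hnorm u v huv]⟩
  exact le_antisymm (csInf_le ⟨2, fun r hr => hr.1⟩ ⟨le_rfl, hnzf⟩)
    (le_csInf ⟨2, le_rfl, hnzf⟩ fun r hr => hr.1)

def cdcFlow {d : ℕ} (c : Fin d → V → V → ℤ) (u v : V) : EuclideanSpace ℝ (Fin d) :=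
  WithLp.toLp 2 fun i => (c i u v : ℝ)

namespace IsOrientedCDC

variable {d : ℕ} {c : Fin d → V → V → ℤ}

theorem isFlow_cdcFlow (hc : IsOrientedCDC G c) : IsFlow G (cdcFlow c) := by
  obtain ⟨hanti, hsupp, -, hcons, -⟩ := hc
  refine ⟨fun u v => ?_, fun u v huv => ?_, fun v => ?_⟩ <;> ext i
  · simp [cdcFlow, hanti i u v]
  · simp [cdcFlow, hsupp i u v huv]
  · simpa [cdcFlow] using congr(($(hcons i v) : ℝ))

theorem sum_cdcFlow_eq_zero (hc : IsOrientedCDC G c) (u v : V) : ∑ i, cdcFlow c u v i = 0 := by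
  by_cases huv : G.Adj u v
  · simpa [cdcFlow] using congr(($((hc.2.2.2.2 u v huv).2) : ℝ))
  · simp [cdcFlow, hc.2.1 _ u v huv]

theorem norm_cdcFlow (hc : IsOrientedCDC G c) {u v : V} (huv : G.Adj u v) :
    ‖cdcFlow c u v‖ = √2 := by
  rw [EuclideanSpace.norm_eq]
  congr 1
  simpa [cdcFlow] using congr(($((hc.2.2.2.2 u v huv).1) : ℝ))

theorem exists_unit_flow (hc : IsOrientedCDC G c) :
    ∃ f : V → V → EuclideanSpace ℝ (Fin (d - 1)), IsFlow G f ∧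
      ∀ u v, G.Adj u v → ‖f u v‖ = 1 := by
  obtain ⟨T, hT⟩ := EuclideanSpace.exists_linearMap_norm_eq_of_sum_eq_zero d
  refine ⟨fun u v => (√2)⁻¹ • T (cdcFlow c u v), hc.isFlow_cdcFlow.map ((√2)⁻¹ • T),
    fun u v huv => ?_⟩
  rw [norm_smul, hT _ (hc.sum_cdcFlow_eq_zero u v), hc.norm_cdcFlow huv, norm_inv,
    Real.norm_of_nonneg (Real.sqrt_nonneg 2), inv_mul_cancel₀ (by positivity)]

end IsOrientedCDC

end Flows

theorem stmt12 {V : Type*} [Fintype V] (G : SimpleGraph V) (d : ℕ)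
    (h : ∃ c : Fin d → V → V → ℤ, IsOrientedCDC G c) :
    flowNumber G (d - 1) = 2 ∧
    ∃ f : V → V → EuclideanSpace ℝ (Fin (d - 1)), IsFlow G f ∧
      ∀ u v, G.Adj u v → ‖f u v‖ = 1 := by
  obtain ⟨c, hc⟩ := h
  exact ⟨flowNumber_eq_two_of_exists_unit_flow hc.exists_unit_flow, hc.exists_unit_flow⟩
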